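/- For every string T and every modified LZ-like encoding of T of size z̃', it holds that z(T) ≤ 2·z̃', where z(T) is the size of the greedy LZ77 parsing of T. -/
import Mathlib


variable {α : Type*}

/-- The substring `T[i..i+ℓ)` (0-indexed). -/
def sub (T : List α) (i ℓ : ℕ) : List α := (T.drop i).take ℓ

/-- `p` is a period of `w`: `0 < p ≤ |w|` and `w[i] = w[i+p]` whenever both sides exist. -/
def IsPeriod (w : List α) (p : ℕ) : Prop :=
  0 < p ∧ p ≤ w.length ∧ ∀ i, i + p < w.length → w[i]? = w[i + p]?

/-- The minimum period of `w`. -/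
noncomputable def minPeriod (w : List α) : ℕ := sInf {p | IsPeriod w p}

/-- Starting position (0-indexed) of the `j`-th phrase (0-indexed) of a parsing,
the parsing being given as a list of (length, source) pairs. -/
def startOf (P : List (ℕ × ℕ)) (j : ℕ) : ℕ := ((P.take j).map Prod.fst).sum

/-- Length of the `j`-th phrase. -/
def lenOf (P : List (ℕ × ℕ)) (j : ℕ) : ℕ := (P[j]?.map Prod.fst).getD 0

/-- Source of the `j`-th phrase. -/
def srcOf (P : List (ℕ × ℕ)) (j : ℕ) : ℕ := (P[j]?.map Prod.snd).getD 0

/-- `P` is an LZ-like encoding of `T`: phrases have positive length, cover `T`,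
and every phrase of length at least 2 has a source strictly before its start with a
matching (possibly overlapping) previous occurrence. (Length-1 phrases are literal
symbols; the symbol is determined by `T`, so it need not be stored.) -/
def IsLZ (T : List α) (P : List (ℕ × ℕ)) : Prop :=
  (∀ q ∈ P, 1 ≤ q.1) ∧ (P.map Prod.fst).sum = T.length ∧
  ∀ j < P.length, 2 ≤ lenOf P j →
    srcOf P j < startOf P j ∧
    sub T (srcOf P j) (lenOf P j) = sub T (startOf P j) (lenOf P j)

/-- `H` is the height function of the LZ-like encoding `P`:
`H i = 0` on length-1 phrases, and otherwise
`H i = H (s_j + (i - b_j) % (b_j - s_j)) + 1` for position `i` of phrase `j`. -/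
def IsHeight (P : List (ℕ × ℕ)) (H : ℕ → ℕ) : Prop :=
  ∀ j < P.length, ∀ i, startOf P j ≤ i → i < startOf P j + lenOf P j →
    (lenOf P j = 1 → H i = 0) ∧
    (2 ≤ lenOf P j →
      H i = H (srcOf P j + (i - startOf P j) % (startOf P j - srcOf P j)) + 1)

/-- The LZ-like encoding `P` of `T` is `h`-bounded. -/
def HBounded (T : List α) (P : List (ℕ × ℕ)) (h : ℕ) : Prop :=
  ∃ H : ℕ → ℕ, IsHeight P H ∧ ∀ i < T.length, H i ≤ h

/-- `z^h(T)`: minimum size of an `h`-bounded LZ-like encoding of `T`. -/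
noncomputable def zh (T : List α) (h : ℕ) : ℕ :=
  sInf {k | ∃ P : List (ℕ × ℕ), IsLZ T P ∧ HBounded T P h ∧ P.length = k}

/-- `lpf_T(b)`: length of the longest previous factor at position `b` (0-indexed). -/
noncomputable def lpf (T : List α) (b : ℕ) : ℕ :=
  sSup {l | b + l ≤ T.length ∧ ∃ s < b, sub T s l = sub T b l}

/-- Number of phrases of the greedy LZ77 parsing of `T[b..)`;
`lzCount T 0 = z(T)` is the size of the greedy LZ77 parsing of `T`. -/
noncomputable def lzCount (T : List α) (b : ℕ) : ℕ :=
  if hb : b < T.length then lzCount T (b + max 1 (lpf T b)) + 1 else 0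
termination_by T.length - b
decreasing_by
  have h1 : 1 ≤ max 1 (lpf T b) := le_max_left _ _
  omega

/-- Starting positions of the phrases of the greedy LZ77 parsing of `T` (from `b`). -/
noncomputable def lzStarts (T : List α) (b : ℕ) : List ℕ :=
  if hb : b < T.length then b :: lzStarts T (b + max 1 (lpf T b)) else []
termination_by T.length - b
decreasing_by
  have h1 : 1 ≤ max 1 (lpf T b) := le_max_left _ _
  omega

/-- `P` is a modified LZ-like encoding of `T`: phrases have positive length, cover `T`,
and every phrase whose minimum period `p` is at least 2 has a source strictly before
its start with a previous occurrence of its length-`p` prefix. (Phrases of minimum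
period 1 are encoded by their symbol, which is determined by `T`.) -/
def IsModLZ (T : List α) (P : List (ℕ × ℕ)) : Prop :=
  (∀ q ∈ P, 1 ≤ q.1) ∧ (P.map Prod.fst).sum = T.length ∧
  ∀ j < P.length, 2 ≤ minPeriod (sub T (startOf P j) (lenOf P j)) →
    srcOf P j < startOf P j ∧
    sub T (srcOf P j) (minPeriod (sub T (startOf P j) (lenOf P j))) =
      sub T (startOf P j) (minPeriod (sub T (startOf P j) (lenOf P j)))

/-- `H` is the height function of the modified LZ-like encoding `P` of `T`:
`H i = 0` on period-1 phrases, and otherwise `H i = H (s_j + (i - b_j) % p_j) + 1`. -/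
def ModIsHeight (T : List α) (P : List (ℕ × ℕ)) (H : ℕ → ℕ) : Prop :=
  ∀ j < P.length, ∀ i, startOf P j ≤ i → i < startOf P j + lenOf P j →
    (minPeriod (sub T (startOf P j) (lenOf P j)) = 1 → H i = 0) ∧
    (2 ≤ minPeriod (sub T (startOf P j) (lenOf P j)) →
      H i = H (srcOf P j +
        (i - startOf P j) % minPeriod (sub T (startOf P j) (lenOf P j))) + 1)

/-- The modified LZ-like encoding `P` of `T` is `h`-bounded. -/
def ModHBounded (T : List α) (P : List (ℕ × ℕ)) (h : ℕ) : Prop :=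
  ∃ H : ℕ → ℕ, ModIsHeight T P H ∧ ∀ i < T.length, H i ≤ h

/-- `z̃^h(T)`: minimum size of an `h`-bounded modified LZ-like encoding of `T`. -/
noncomputable def mzh (T : List α) (h : ℕ) : ℕ :=
  sInf {k | ∃ P : List (ℕ × ℕ), IsModLZ T P ∧ ModHBounded T P h ∧ P.length = k}

lemma sub_getElem?' (T : List α) (b ℓ i : ℕ) (h : i < ℓ) :
    (sub T b ℓ)[i]? = T[b + i]? := by
  simp [sub, List.getElem?_take, h, List.getElem?_drop, Nat.add_comm]

lemma sub_length' (T : List α) (b ℓ : ℕ) (h : b + ℓ ≤ T.length) :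
    (sub T b ℓ).length = ℓ := by
  simp [sub]; omega

lemma lpf_bdd (T : List α) (b : ℕ) :
    BddAbove {l | b + l ≤ T.length ∧ ∃ s < b, sub T s l = sub T b l} :=
  ⟨T.length, fun l hl => le_trans (Nat.le_add_left _ _) hl.1⟩

lemma lpf_ge (T : List α) {b l s : ℕ} (h : b + l ≤ T.length) (hs : s < b)
    (he : sub T s l = sub T b l) : l ≤ lpf T b :=
  le_csSup (lpf_bdd T b) ⟨h, s, hs, he⟩

lemma sub_tail (T : List α) (s l : ℕ) :
    sub T (s + 1) (l - 1) = (sub T s l).drop 1 := by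
  simp [sub, List.drop_take, List.drop_drop, Nat.add_comm]

lemma lpf_shift (T : List α) (i : ℕ) : lpf T i ≤ lpf T (i + 1) + 1 := by
  rcases Nat.eq_zero_or_pos (lpf T i) with h | h
  · omega
  · have hne : {l | i + l ≤ T.length ∧ ∃ s < i, sub T s l = sub T i l}.Nonempty := by
      by_contra hne
      rw [Set.not_nonempty_iff_eq_empty] at hne
      have : lpf T i = 0 := by rw [lpf, hne]; simp
      omega
    have hmem : i + lpf T i ≤ T.length ∧
        ∃ s < i, sub T s (lpf T i) = sub T i (lpf T i) :=
      Nat.sSup_mem hne (lpf_bdd T i)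
    obtain ⟨h1, s, hs, he⟩ := hmem
    have : lpf T i - 1 ≤ lpf T (i + 1) := by
      apply lpf_ge T (by omega) (s := s + 1) (by omega)
      rw [sub_tail, sub_tail, he]
    omega

lemma next_mono (T : List α) {i j : ℕ} (h : i ≤ j) :
    i + max 1 (lpf T i) ≤ j + max 1 (lpf T j) := by
  induction j, h using Nat.le_induction with
  | base => exact le_refl _
  | succ n hn ih => have := lpf_shift T n; omega

lemma lzCount_eq (T : List α) (i : ℕ) :
    lzCount T i = if _ : i < T.length then lzCount T (i + max 1 (lpf T i)) + 1 else 0 := by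
  rw [lzCount]

lemma lzCount_anti (T : List α) (i j : ℕ) (h : i ≤ j) : lzCount T j ≤ lzCount T i := by
  by_cases hj : j < T.length
  · have hi : i < T.length := lt_of_le_of_lt h hj
    rw [lzCount_eq T i, dif_pos hi, lzCount_eq T j, dif_pos hj]
    exact Nat.succ_le_succ (lzCount_anti T _ _ (next_mono T h))
  · rw [lzCount_eq T j, dif_neg hj]; exact Nat.zero_le _
termination_by T.length - i
decreasing_by have := le_max_left 1 (lpf T i); omega

lemma lpf_inside (T : List α) {b ℓ c i : ℕ} (hbl : b + ℓ ≤ T.length)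
    (hper : IsPeriod (sub T b ℓ) c) (h1 : b + c ≤ i) (h2 : i < b + ℓ) :
    b + ℓ - i ≤ lpf T i := by
  obtain ⟨hc, hcl, hp⟩ := hper
  have hlen : (sub T b ℓ).length = ℓ := sub_length' T b ℓ hbl
  rw [hlen] at hcl
  apply lpf_ge T (l := b + ℓ - i) (by omega) (s := i - c) (by omega)
  apply List.ext_getElem?
  intro k
  by_cases hk : k < b + ℓ - i
  · rw [sub_getElem?' _ _ _ _ hk, sub_getElem?' _ _ _ _ hk]
    have hm := hp (i - c + k - b) (by rw [hlen]; omega)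
    rw [sub_getElem?' _ _ _ _ (by omega), sub_getElem?' _ _ _ _ (by omega)] at hm
    have e1 : b + (i - c + k - b) = i - c + k := by omega
    have e2 : b + (i - c + k - b + c) = i + k := by omega
    rw [e1, e2] at hm
    exact hm
  · have l1 : (sub T (i - c) (b + ℓ - i)).length = b + ℓ - i :=
      sub_length' T _ _ (by omega)
    have l2 : (sub T i (b + ℓ - i)).length = b + ℓ - i :=
      sub_length' T _ _ (by omega)
    rw [List.getElem?_eq_none (by omega), List.getElem?_eq_none (by omega)]

lemma startOf_succ' (P : List (ℕ × ℕ)) {j : ℕ} (hj : j < P.length) :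
    startOf P (j + 1) = startOf P j + lenOf P j := by
  rw [startOf, startOf, List.map_take, List.map_take,
    List.sum_take_succ _ j (by simpa using hj)]
  simp [lenOf, List.getElem?_eq_getElem hj]

lemma startOf_le_sum (P : List (ℕ × ℕ)) (k : ℕ) :
    startOf P k ≤ (P.map Prod.fst).sum := by
  conv_rhs => rw [← List.take_append_drop k P]
  rw [List.map_append, List.sum_append]
  exact Nat.le_add_right _ _

/-- For every modified LZ-like encoding `P` of `T`, the greedy LZ77 parsing has at
most `2 |P|` phrases. -/
theorem stmt13 (T : List α) (P : List (ℕ × ℕ)) (hP : IsModLZ T P) :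
    lzCount T 0 ≤ 2 * P.length := by
  obtain ⟨hpos, hsum, hsrc⟩ := hP
  have step : ∀ j, j < P.length →
      lzCount T (startOf P j) ≤ lzCount T (startOf P (j + 1)) + 2 := by
    intro j hj
    have hl1 : 1 ≤ lenOf P j := by
      have := hpos P[j] (List.getElem_mem hj)
      simp only [lenOf, List.getElem?_eq_getElem hj, Option.map_some, Option.getD_some]
      exact this
    set b := startOf P j with hb
    set ℓ := lenOf P j with hℓ
    have hend : startOf P (j + 1) = b + ℓ := startOf_succ' P hj
    have hble : b + ℓ ≤ T.length := by
      have h1 := startOf_le_sum P (j + 1)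
      rw [hend, hsum] at h1
      exact h1
    have hwlen : (sub T b ℓ).length = ℓ := sub_length' T b ℓ hble
    set p := minPeriod (sub T b ℓ) with hpdef
    have hpmem : IsPeriod (sub T b ℓ) p := by
      have hmem : p ∈ {q | IsPeriod (sub T b ℓ) q} :=
        Nat.sInf_mem ⟨ℓ, by omega, by omega, fun i hi => absurd hi (by omega)⟩
      exact hmem
    have key : ∃ c, IsPeriod (sub T b ℓ) c ∧ c ≤ max 1 (lpf T b) := by
      rcases Nat.lt_or_ge p 2 with hp2 | hp2
      · exact ⟨p, hpmem, by have := hpmem.1; omega⟩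
      · obtain ⟨hs1, hs2⟩ := hsrc j hj hp2
        have hplen : p ≤ ℓ := by have := hpmem.2.1; omega
        have : p ≤ lpf T b := lpf_ge T (by omega) hs1 hs2
        exact ⟨p, hpmem, le_trans this (le_max_right _ _)⟩
    obtain ⟨c, hcper, hcnext⟩ := key
    have hc1 : 0 < c := hcper.1
    have hcl : c ≤ ℓ := by have := hcper.2.1; omega
    rw [hend]
    have hbT : b < T.length := by omega
    rw [lzCount_eq T b, dif_pos hbT]
    set n1 := b + max 1 (lpf T b) with hn1def
    rcases le_or_gt (b + ℓ) n1 with hn1 | hn1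
    · have := lzCount_anti T (b + ℓ) n1 hn1
      omega
    · have hn1T : n1 < T.length := by omega
      rw [lzCount_eq T n1, dif_pos hn1T]
      have hlow : b + c ≤ n1 := by omega
      have hlpf : b + ℓ - n1 ≤ lpf T n1 := lpf_inside T hble hcper hlow hn1
      have hge : b + ℓ ≤ n1 + max 1 (lpf T n1) := by
        have := le_max_right 1 (lpf T n1); omega
      have := lzCount_anti T (b + ℓ) _ hge
      omega
  have main : ∀ m j, j + m = P.length → lzCount T (startOf P j) ≤ 2 * m := by
    intro m
    induction m with
    | zero =>
      intro j hj
      have hjn : j = P.length := by omega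
      subst hjn
      rw [startOf, List.take_length, hsum]
      rw [lzCount_eq T T.length, dif_neg (lt_irrefl _)]
    | succ m ih =>
      intro j hj
      have h1 := step j (by omega)
      have h2 := ih (j + 1) (by omega)
      omega
  have := main P.length 0 (Nat.zero_add _)
  simpa [startOf] using this
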